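/- arXiv:2403.19564 — 2 statements merged into one kernel-verified Lean document; each statement's English description precedes it below -/
import Mathlib

section
/- Let A be an abelian category, B a Serre subcategory, π : A → A/B the quotient functor, and D a thick subcategory of A containing B. If D is an object of D and A' is an object of A with π(D) ≅ π(A') in A/B, then A' belongs to D. -/
open CategoryTheory CategoryTheory.Limits

universe v u v' u'

variable {C : Type u} [Category.{v} C] [Abelian C]

/-- `X` is a retract (direct summand) of `B`. -/
def IsRetract {E : Type*} [Category E] (X B : E) : Prop :=
  ∃ (s : X ⟶ B) (r : B ⟶ X), s ≫ r = 𝟙 X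

section Defs

variable {A : Type u'} [Category.{v'} A] [Abelian A]

/-- A thick subcategory of an abelian category, given by its set of objects:
strictly full, additive, closed under direct summands, and with the
two-out-of-three property for short exact sequences. -/
structure IsThickAb (T : Set A) : Prop where
  mem_of_iso : ∀ {X Y : A}, (X ≅ Y) → X ∈ T → Y ∈ T
  zero_mem : ∀ {X : A}, IsZero X → X ∈ T
  retract_mem : ∀ {X B : A}, IsRetract X B → B ∈ T → X ∈ T
  mem₂ : ∀ (S : ShortComplex A), S.ShortExact → S.X₁ ∈ T → S.X₃ ∈ T → S.X₂ ∈ T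
  mem₁ : ∀ (S : ShortComplex A), S.ShortExact → S.X₂ ∈ T → S.X₃ ∈ T → S.X₁ ∈ T
  mem₃ : ∀ (S : ShortComplex A), S.ShortExact → S.X₁ ∈ T → S.X₂ ∈ T → S.X₃ ∈ T

/-- The smallest thick subcategory of an abelian category containing `S`. -/
def thickClosure (S : Set A) : Set A :=
  {X | ∀ T : Set A, IsThickAb T → S ⊆ T → X ∈ T}

/-- A Serre subcategory of an abelian category, given by its set of objects:
a nonempty full subcategory closed under subobjects, quotients and extensions. -/
structure IsSerre (B : Set A) : Prop where
  nonempty : B.Nonempty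
  subobject_mem : ∀ {X Y : A} (f : X ⟶ Y), Mono f → Y ∈ B → X ∈ B
  quotient_mem : ∀ {X Y : A} (f : X ⟶ Y), Epi f → X ∈ B → Y ∈ B
  extension_mem : ∀ (S : ShortComplex A), S.ShortExact → S.X₁ ∈ B → S.X₃ ∈ B → S.X₂ ∈ B

/-- The class of morphisms whose kernel and cokernel both lie in `B`.  The Serre
quotient `A ⥤ A/B` is precisely the localization of `A` at this class of morphisms,
so a functor `π : A ⥤ D` is (equivalent to) the Serre quotient functor if and only if
it is a localization functor with respect to `serreW B`. -/
def serreW (B : Set A) : MorphismProperty A :=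
  fun _ _ f => Limits.kernel f ∈ B ∧ Limits.cokernel f ∈ B

/-- The image of a set of objects under a functor, up to isomorphism. -/
def imageSet {A' : Type*} [Category A'] (π : A ⥤ A') (T : Set A) : Set A' :=
  {Y | ∃ X ∈ T, Nonempty (π.obj X ≅ Y)}

end Defs

section Helpers

variable {B : Set C}

lemma IsSerre.mem_of_iso' (hB : IsSerre B) {X Y : C} (e : X ≅ Y) (h : X ∈ B) : Y ∈ B :=
  hB.subobject_mem e.inv inferInstance h

lemma IsSerre.isZero_mem (hB : IsSerre B) {X : C} (hX : IsZero X) : X ∈ B := by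
  obtain ⟨Z, hZ⟩ := hB.nonempty
  have : Mono (hX.to_ Z) := ⟨fun a b _ => hX.eq_of_tgt a b⟩
  exact hB.subobject_mem (hX.to_ Z) this hZ

/-- The short complex `ker w → P → im w`. -/
noncomputable def ses1 {P Q : C} (w : P ⟶ Q) : ShortComplex C :=
  ShortComplex.mk (kernel.ι w) (Abelian.factorThruImage w)
    (by rw [← cancel_mono (Abelian.image.ι w), Category.assoc, Abelian.image.fac,
          kernel.condition, zero_comp])

lemma ses1_shortExact {P Q : C} (w : P ⟶ Q) : (ses1 w).ShortExact := by
  have : Mono (ses1 w).f := by dsimp [ses1]; infer_instance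
  have : Epi (ses1 w).g := by dsimp [ses1]; infer_instance
  exact ⟨ShortComplex.exact_of_f_is_kernel _ (KernelFork.IsLimit.ofι (kernel.ι w) _
    (fun g' hg' => kernel.lift w g'
      (by
        have hg'' : g' ≫ Abelian.factorThruImage w = 0 := hg'
        rw [← Abelian.image.fac w, ← Category.assoc, hg'', zero_comp]))
    (fun g' hg' => kernel.lift_ι _ _ _)
    (fun g' hg' m hm => by rw [← cancel_mono (kernel.ι w), kernel.lift_ι]; exact hm))⟩

/-- The short complex `im w → Q → coker w`. -/
noncomputable def ses2 {P Q : C} (w : P ⟶ Q) : ShortComplex C :=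
  ShortComplex.mk (Abelian.image.ι w) (cokernel.π w) (kernel.condition _)

lemma ses2_shortExact {P Q : C} (w : P ⟶ Q) : (ses2 w).ShortExact := by
  have : Mono (ses2 w).f := by dsimp [ses2]; infer_instance
  have : Epi (ses2 w).g := by dsimp [ses2]; infer_instance
  exact ⟨ShortComplex.exact_of_f_is_kernel _ (kernelIsKernel _)⟩

lemma IsSerre.mem_of_hom_to (hB : IsSerre B) {P Q : C} (φ : P ⟶ Q)
    (h1 : kernel φ ∈ B) (h2 : Q ∈ B) : P ∈ B :=
  hB.extension_mem (ses1 φ) (ses1_shortExact φ) h1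
    (hB.subobject_mem (Abelian.image.ι φ) (show Mono (kernel.ι _) by infer_instance) h2)

lemma IsSerre.mem_of_hom_from (hB : IsSerre B) {P Q : C} (φ : P ⟶ Q)
    (h1 : P ∈ B) (h2 : cokernel φ ∈ B) : Q ∈ B :=
  hB.extension_mem (ses2 φ) (ses2_shortExact φ)
    (hB.quotient_mem (Abelian.factorThruImage φ) (Abelian.instEpiFactorThruImage φ) h1) h2

lemma IsThickAb.iff_of_serreW {T : Set C} (hT : IsThickAb T) (hBT : B ⊆ T)
    {P Q : C} (w : P ⟶ Q) (hw : serreW B w) : P ∈ T ↔ Q ∈ T := by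
  have hk : kernel w ∈ T := hBT hw.1
  have hc : cokernel w ∈ T := hBT hw.2
  constructor
  · intro hP
    have him : Abelian.image w ∈ T := hT.mem₃ (ses1 w) (ses1_shortExact w) hk hP
    exact hT.mem₂ (ses2 w) (ses2_shortExact w) him hc
  · intro hQ
    have him : Abelian.image w ∈ T := hT.mem₁ (ses2 w) (ses2_shortExact w) hQ hc
    exact hT.mem₂ (ses1 w) (ses1_shortExact w) hk him

lemma IsSerre.serreW_id (hB : IsSerre B) (X : C) : serreW B (𝟙 X) := by
  constructor
  · refine hB.isZero_mem (IsZero.of_mono_eq_zero (kernel.ι (𝟙 X)) ?_)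
    rw [← Category.comp_id (kernel.ι (𝟙 X)), kernel.condition]
  · refine hB.isZero_mem (IsZero.of_epi_eq_zero (cokernel.π (𝟙 X)) ?_)
    rw [← Category.id_comp (cokernel.π (𝟙 X)), cokernel.condition]

lemma IsSerre.serreW_comp (hB : IsSerre B) {X Y Z : C} {f : X ⟶ Y} {g : Y ⟶ Z}
    (hf : serreW B f) (hg : serreW B g) : serreW B (f ≫ g) := by
  constructor
  · -- kernel
    set φ : kernel (f ≫ g) ⟶ kernel g :=
      kernel.lift g (kernel.ι (f ≫ g) ≫ f)
        (by rw [Category.assoc, kernel.condition]) with hφ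
    have hφι : φ ≫ kernel.ι g = kernel.ι (f ≫ g) ≫ f := kernel.lift_ι _ _ _
    refine hB.mem_of_hom_to φ ?_ hg.1
    have hm : kernel.ι φ ≫ kernel.ι (f ≫ g) ≫ f = 0 := by
      rw [← hφι, ← Category.assoc, kernel.condition, zero_comp]
    set m : kernel φ ⟶ kernel f :=
      kernel.lift f (kernel.ι φ ≫ kernel.ι (f ≫ g))
        (by rw [Category.assoc]; exact hm) with hmdef
    have : Mono (m ≫ kernel.ι f) := by
      rw [hmdef, kernel.lift_ι]; infer_instance
    exact hB.subobject_mem m (mono_of_mono m (kernel.ι f)) hf.1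
  · -- cokernel
    set θ : cokernel f ⟶ cokernel (f ≫ g) :=
      cokernel.desc f (g ≫ cokernel.π (f ≫ g))
        (by rw [← Category.assoc, cokernel.condition]) with hθ
    have hθπ : cokernel.π f ≫ θ = g ≫ cokernel.π (f ≫ g) := cokernel.π_desc _ _ _
    refine hB.mem_of_hom_from θ hf.2 ?_
    have hd : g ≫ cokernel.π (f ≫ g) ≫ cokernel.π θ = 0 := by
      rw [← Category.assoc, ← hθπ, Category.assoc, cokernel.condition, comp_zero]
    set d : cokernel g ⟶ cokernel θ :=
      cokernel.desc g (cokernel.π (f ≫ g) ≫ cokernel.π θ) hd with hddef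
    have : Epi (cokernel.π g ≫ d) := by
      rw [hddef, cokernel.π_desc]; exact epi_comp _ _
    exact hB.quotient_mem d (epi_of_epi (cokernel.π g) d) hg.2

open CategoryTheory.Abelian (Pseudoelement)
open CategoryTheory.Abelian.Pseudoelement (pseudoApply pseudo_exact_of_exact
  epi_of_pseudo_surjective pseudo_injective_of_mono)

lemma pseudoApply_id {P : C} (a : Pseudoelement P) : pseudoApply (𝟙 P) a = a := by
  refine Quotient.inductionOn a (fun x => Quotient.sound ?_)
  exact ⟨x.left, 𝟙 _, 𝟙 _, instEpiId _, instEpiId _, by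
    simp [CategoryTheory.Abelian.app_hom]; exact Category.id_comp _⟩

lemma IsSerre.serre_ore (hB : IsSerre B) {A X Y : C} (s : A ⟶ X) (hs : serreW B s)
    (f : A ⟶ Y) :
    ∃ (Z : C) (f' : X ⟶ Z) (s' : Y ⟶ Z), serreW B s' ∧ f ≫ s' = s ≫ f' := by
  set u : A ⟶ X ⊞ Y := biprod.lift s f with hu
  set p : (X ⊞ Y : C) ⟶ cokernel u := cokernel.π u with hp
  set s' : Y ⟶ cokernel u := biprod.inr ≫ p with hs'def
  have h0 : s ≫ biprod.inl ≫ p + f ≫ s' = 0 := by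
    rw [hs'def, ← Category.assoc, ← Category.assoc, ← Preadditive.add_comp,
      ← biprod.lift_eq, ← hu, hp, cokernel.condition]
  have hcomm : f ≫ s' = s ≫ (-(biprod.inl ≫ p)) := by
    rw [Preadditive.comp_neg, eq_neg_iff_add_eq_zero, add_comm]
    exact h0
  refine ⟨cokernel u, -(biprod.inl ≫ p), s', ⟨?_, ?_⟩, hcomm⟩
  · -- kernel s' ∈ B
    have hwcond : (kernel.ι s ≫ f) ≫ s' = 0 := by
      rw [Category.assoc, hcomm, ← Category.assoc, kernel.condition, zero_comp]
    set w : kernel s ⟶ kernel s' := kernel.lift s' (kernel.ι s ≫ f) hwcond with hwdef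
    have hwι : w ≫ kernel.ι s' = kernel.ι s ≫ f := kernel.lift_ι _ _ _
    have hepi : Epi w := by
      apply epi_of_pseudo_surjective
      intro c
      -- exactness of (u, p)
      have hSu : (ShortComplex.mk u p (cokernel.condition u)).Exact :=
        ShortComplex.exact_of_g_is_cokernel _ (cokernelIsCokernel u)
      have hSs : (ShortComplex.mk (kernel.ι s) s (kernel.condition s)).Exact :=
        ShortComplex.exact_of_f_is_kernel _ (kernelIsKernel s)
      have hιs' : kernel.ι s' ≫ biprod.inr ≫ p = 0 := by
        rw [← hs'def]; exact kernel.condition s'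
      have hy : pseudoApply p (pseudoApply biprod.inr (pseudoApply (kernel.ι s') c)) = 0 := by
        rw [← CategoryTheory.Abelian.Pseudoelement.comp_apply, ← CategoryTheory.Abelian.Pseudoelement.comp_apply, hιs']
        exact CategoryTheory.Abelian.Pseudoelement.zero_apply _ c
      obtain ⟨a, ha⟩ := pseudo_exact_of_exact hSu _ hy
      have hufst : u ≫ biprod.fst = s := by rw [hu]; simp
      have husnd : u ≫ biprod.snd = f := by rw [hu]; simp
      have hsa : pseudoApply s a = 0 := by
        have h1 : pseudoApply biprod.fst (pseudoApply u a) =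
            pseudoApply biprod.fst (pseudoApply biprod.inr (pseudoApply (kernel.ι s') c)) := by
          rw [ha]
        rw [← CategoryTheory.Abelian.Pseudoelement.comp_apply, ← CategoryTheory.Abelian.Pseudoelement.comp_apply,
          hufst, biprod.inr_fst] at h1
        rw [h1]
        exact CategoryTheory.Abelian.Pseudoelement.zero_apply _ _
      obtain ⟨b, hb⟩ := pseudo_exact_of_exact hSs _ hsa
      refine ⟨b, pseudo_injective_of_mono (kernel.ι s') ?_⟩
      have h1 : pseudoApply (kernel.ι s') (pseudoApply w b) = pseudoApply f a := by
        rw [← CategoryTheory.Abelian.Pseudoelement.comp_apply, hwι, CategoryTheory.Abelian.Pseudoelement.comp_apply, hb]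
      have h2 : pseudoApply f a = pseudoApply (kernel.ι s') c := by
        have h3 : pseudoApply (biprod.snd : X ⊞ Y ⟶ Y) (pseudoApply u a) =
            pseudoApply (biprod.snd : X ⊞ Y ⟶ Y)
              (pseudoApply (biprod.inr : Y ⟶ X ⊞ Y) (pseudoApply (kernel.ι s') c)) := by
          rw [ha]
        rw [← CategoryTheory.Abelian.Pseudoelement.comp_apply, ← CategoryTheory.Abelian.Pseudoelement.comp_apply,
          husnd, biprod.inr_snd, pseudoApply_id] at h3
        exact h3
      rw [h1, h2]
    exact hB.quotient_mem w hepi hs.1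
  · -- cokernel s' ∈ B
    set q : cokernel u ⟶ cokernel s' := cokernel.π s' with hq
    have hfsq : (f ≫ s') ≫ q = 0 := by
      rw [Category.assoc, hq, cokernel.condition, comp_zero]
    have hdc : s ≫ biprod.inl ≫ p ≫ q = 0 := by
      have h0' : (s ≫ biprod.inl ≫ p) ≫ q + (f ≫ s') ≫ q = 0 := by
        rw [← Preadditive.add_comp, h0, zero_comp]
      rw [hfsq, add_zero] at h0'
      simpa only [Category.assoc] using h0'
    set d : cokernel s ⟶ cokernel s' := cokernel.desc s (biprod.inl ≫ p ≫ q) hdc with hddef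
    have hrq : biprod.inr ≫ p ≫ q = 0 := by
      rw [← Category.assoc, ← hs'def, hq]
      exact cokernel.condition s'
    have hepi2 : Epi (biprod.inl ≫ p ≫ q) := by
      have hpq : biprod.fst ≫ biprod.inl ≫ p ≫ q = p ≫ q := by
        apply biprod.hom_ext'
        · simp
        · simp [reassoc_of% hrq, hrq]
      have : Epi ((biprod.fst : X ⊞ Y ⟶ X) ≫ biprod.inl ≫ p ≫ q) := by
        rw [hpq]; exact epi_comp _ _
      exact epi_of_epi (biprod.fst : X ⊞ Y ⟶ X) _
    have : Epi (cokernel.π s ≫ d) := by rw [hddef, cokernel.π_desc]; exact hepi2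
    exact hB.quotient_mem d (epi_of_epi (cokernel.π s) d) hs.2

lemma IsSerre.serre_ext (hB : IsSerre B) {A X Y : C} (f₁ f₂ : X ⟶ Y) (s : A ⟶ X)
    (hs : serreW B s) (hsf : s ≫ f₁ = s ≫ f₂) :
    ∃ (Z : C) (t : Y ⟶ Z), serreW B t ∧ f₁ ≫ t = f₂ ≫ t := by
  set g : X ⟶ Y := f₁ - f₂ with hg
  have hsg : s ≫ g = 0 := by rw [hg, Preadditive.comp_sub, hsf, sub_self]
  refine ⟨cokernel g, cokernel.π g, ⟨?_, ?_⟩, ?_⟩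
  · -- kernel (cokernel.π g) ∈ B
    set d : cokernel s ⟶ Y := cokernel.desc s g hsg with hddef
    have hd : d ≫ cokernel.π g = 0 := by
      rw [← cancel_epi (cokernel.π s), ← Category.assoc, hddef, cokernel.π_desc,
        cokernel.condition, comp_zero]
    set q : cokernel s ⟶ kernel (cokernel.π g) := kernel.lift (cokernel.π g) d hd with hqdef
    have hfac : cokernel.π s ≫ q = Abelian.factorThruImage g := by
      rw [← cancel_mono (Abelian.image.ι g), Category.assoc, Abelian.image.fac]
      show cokernel.π s ≫ q ≫ kernel.ι (cokernel.π g) = g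
      rw [hqdef, kernel.lift_ι, hddef, cokernel.π_desc]
    have : Epi (cokernel.π s ≫ q) := by rw [hfac]; infer_instance
    exact hB.quotient_mem q (epi_of_epi (cokernel.π s) q) hs.2
  · -- cokernel (cokernel.π g) ∈ B
    exact hB.isZero_mem (IsZero.of_epi_eq_zero (cokernel.π (cokernel.π g))
      (cokernel.π_of_epi _))
  · rw [← sub_eq_zero, ← Preadditive.sub_comp, ← hg, cokernel.condition]

lemma IsSerre.hasLeftCalculusOfFractions (hB : IsSerre B) :
    (serreW B).HasLeftCalculusOfFractions where
  toIsMultiplicative :=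
    { id_mem := hB.serreW_id
      comp_mem := fun _ _ hf hg => hB.serreW_comp hf hg }
  exists_leftFraction X Y φ := by
    obtain ⟨Z, f', s', hs', hcomm⟩ := hB.serre_ore φ.s φ.hs φ.f
    exact ⟨MorphismProperty.LeftFraction.mk f' s' hs', hcomm⟩
  ext X' X Y f₁ f₂ s hs hsf := by
    obtain ⟨Z, t, ht, hft⟩ := hB.serre_ext f₁ f₂ s hs hsf
    exact ⟨Z, t, ht, hft⟩

end Helpers

variable {D : Type u'} [Category.{v'} D] [Abelian D]

section Loc

variable {B : Set C} (π : C ⥤ D) [π.IsLocalization (serreW B)]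

lemma exists_comp_serreW (hB : IsSerre B) {X Z : C} (f : X ⟶ Z)
    (hf : IsIso (π.map f)) :
    ∃ (Z₂ : C) (u : Z ⟶ Z₂), serreW B (f ≫ u) ∧ IsIso (π.map u) := by
  haveI := hB.hasLeftCalculusOfFractions
  obtain ⟨ψ, hψ⟩ := Localization.exists_leftFraction π (W := serreW B) (inv (π.map f))
  have hψs : IsIso (π.map ψ.s) := Localization.inverts π (serreW B) ψ.s ψ.hs
  have hmap : π.map ψ.f = inv (π.map f) ≫ π.map ψ.s := by
    rw [← ψ.map_comp_map_s π (Localization.inverts π (serreW B)), ← hψ]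
  have heq : π.map (f ≫ ψ.f) = π.map ψ.s := by
    rw [π.map_comp, hmap, IsIso.hom_inv_id_assoc]
  rw [MorphismProperty.map_eq_iff_postcomp π (W := serreW B)] at heq
  obtain ⟨Z₂, a, ha, hfa⟩ := heq
  refine ⟨Z₂, ψ.f ≫ a, ?_, ?_⟩
  · rw [← Category.assoc, hfa]
    exact hB.serreW_comp ψ.hs ha
  · haveI : IsIso (π.map a) := Localization.inverts π (serreW B) a ha
    rw [π.map_comp, hmap]
    infer_instance

lemma thick_iff_of_isIso_map (hB : IsSerre B) {T : Set C} (hT : IsThickAb T)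
    (hBT : B ⊆ T) {X Z : C} (f : X ⟶ Z) (hf : IsIso (π.map f)) :
    X ∈ T ↔ Z ∈ T := by
  obtain ⟨Z₂, u, hfu, hu⟩ := exists_comp_serreW π hB f hf
  haveI := hu
  obtain ⟨Z₃, v, huv, hv⟩ := exists_comp_serreW π hB u hu
  have hW : serreW B u := by
    constructor
    · set m : kernel u ⟶ kernel (u ≫ v) :=
        kernel.lift (u ≫ v) (kernel.ι u) (by rw [← Category.assoc, kernel.condition, zero_comp])
        with hmdef
      have : Mono (m ≫ kernel.ι (u ≫ v)) := by rw [hmdef, kernel.lift_ι]; infer_instance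
      exact hB.subobject_mem m (mono_of_mono m (kernel.ι (u ≫ v))) huv.1
    · set d : cokernel (f ≫ u) ⟶ cokernel u :=
        cokernel.desc (f ≫ u) (cokernel.π u)
          (by rw [Category.assoc, cokernel.condition, comp_zero])
        with hddef
      have : Epi (cokernel.π (f ≫ u) ≫ d) := by rw [hddef, cokernel.π_desc]; infer_instance
      exact hB.quotient_mem d (epi_of_epi (cokernel.π (f ≫ u)) d) hfu.2
  rw [hT.iff_of_serreW hBT (f ≫ u) hfu, hT.iff_of_serreW hBT u hW]

end Loc

/-- Let `B` be a Serre subcategory of the abelian category `C`, `π : C ⥤ D` the quotient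
functor, and `T` a thick subcategory of `C` containing `B`.  If `X ∈ T` and `Y` is an
object of `C` with `π(X) ≅ π(Y)`, then `Y ∈ T`. -/
theorem mem_thick_of_iso_in_quotient (B : Set C) (hB : IsSerre B)
    (π : C ⥤ D) [π.IsLocalization (serreW B)]
    (T : Set C) (hT : IsThickAb T) (hBT : B ⊆ T)
    (X : C) (hX : X ∈ T) (Y : C) (e : π.obj X ≅ π.obj Y) : Y ∈ T := by
  haveI := hB.hasLeftCalculusOfFractions
  obtain ⟨φ, hφ⟩ := Localization.exists_leftFraction π (W := serreW B) e.hom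
  have hφs : IsIso (π.map φ.s) := Localization.inverts π (serreW B) φ.s φ.hs
  have hmap : π.map φ.f = e.hom ≫ π.map φ.s := by
    rw [← φ.map_comp_map_s π (Localization.inverts π (serreW B)), ← hφ]
  have hiso : IsIso (π.map φ.f) := by rw [hmap]; infer_instance
  have h1 : X ∈ T ↔ φ.Y' ∈ T := thick_iff_of_isIso_map π hB hT hBT φ.f hiso
  have h2 : Y ∈ T ↔ φ.Y' ∈ T := hT.iff_of_serreW hBT φ.s φ.hs
  exact h2.mpr (h1.mp hX)
end

section
/- Let A be an abelian category, B a Serre subcategory with quotient functor π : A → A/B, and D a thick subcategory of A containing B. Then π(D), i.e. the full subcategory of A/B of objects isomorphic to π(X) for X ∈ D, is a thick subcategory of A/B, and D = π^{-1}(π(D)). -/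
open CategoryTheory CategoryTheory.Limits

universe v u v' u'

variable {C : Type u} [Category.{v} C] [Abelian C]

namespace SerreAux

variable {A : Type u} [Category.{v} A] [Abelian A] {B : Set A}
variable {E : Type u'} [Category.{v'} E] [Abelian E]

open ZeroObject

lemma memIso (hB : IsSerre B) {X Y : A} (e : X ≅ Y) (hX : X ∈ B) : Y ∈ B :=
  hB.subobject_mem e.inv (by infer_instance) hX

lemma zeroMem (hB : IsSerre B) {Z : A} (hZ : IsZero Z) : Z ∈ B := by
  obtain ⟨X₀, hX₀⟩ := hB.nonempty
  exact hB.subobject_mem (0 : Z ⟶ X₀) ⟨fun g h _ => hZ.eq_of_tgt g h⟩ hX₀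

lemma ker_im_zero {X Y : A} (f : X ⟶ Y) :
    kernel.ι f ≫ Abelian.factorThruImage f = 0 := by
  rw [← cancel_mono (Abelian.image.ι f), Category.assoc, Abelian.image.fac,
    kernel.condition, zero_comp]

lemma im_coker_zero {X Y : A} (f : X ⟶ Y) :
    Abelian.image.ι f ≫ cokernel.π f = 0 := by
  rw [← cancel_epi (Abelian.factorThruImage f), ← Category.assoc, Abelian.image.fac,
    cokernel.condition, comp_zero]

lemma shortExact_ker_im {X Y : A} (f : X ⟶ Y) :
    (ShortComplex.mk (kernel.ι f) (Abelian.factorThruImage f) (ker_im_zero f)).ShortExact := by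
  refine ShortComplex.ShortExact.mk' ?_ (by dsimp; infer_instance) (by dsimp; infer_instance)
  refine ShortComplex.exact_of_f_is_kernel _ ?_
  refine KernelFork.IsLimit.ofι _ _
    (fun {A'} u hu => kernel.lift f u ?_) (fun {A'} u hu => by simp) ?_
  · rw [← Abelian.image.fac f, ← Category.assoc, hu, zero_comp]
  · intro A' u hu m hm
    rw [← cancel_mono (kernel.ι f), hm, kernel.lift_ι]

lemma shortExact_im_coker {X Y : A} (f : X ⟶ Y) :
    (ShortComplex.mk (Abelian.image.ι f) (cokernel.π f) (im_coker_zero f)).ShortExact := by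
  refine ShortComplex.ShortExact.mk' ?_ (by dsimp; infer_instance) (by dsimp; infer_instance)
  refine ShortComplex.exact_of_g_is_cokernel _ ?_
  refine CokernelCofork.IsColimit.ofπ _ _
    (fun {A'} u hu => cokernel.desc f u ?_) (fun {A'} u hu => by simp) ?_
  · rw [← Abelian.image.fac f, Category.assoc, hu, comp_zero]
  · intro A' u hu m hm
    rw [← cancel_epi (cokernel.π f), hm, cokernel.π_desc]

lemma serreW_of_isIso (hB : IsSerre B) {X Y : A} (f : X ⟶ Y) [hf : IsIso f] : serreW B f := by
  have : Mono f := by infer_instance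
  have : Epi f := by infer_instance
  constructor
  · exact zeroMem hB (IsZero.of_iso (isZero_zero A) (kernel.ofMono f))
  · exact zeroMem hB (IsZero.of_iso (isZero_zero A) (cokernel.ofEpi f))

lemma serreW_multiplicative (hB : IsSerre B) : (serreW B).IsMultiplicative where
  id_mem X := serreW_of_isIso hB (𝟙 X)
  comp_mem := by
    intro X Y Z f g hf hg
    constructor
    · -- kernel (f ≫ g) ∈ B
      have hu : (kernel.ι (f ≫ g) ≫ f) ≫ g = 0 := by
        rw [Category.assoc, kernel.condition]
      set u : kernel (f ≫ g) ⟶ kernel g := kernel.lift g (kernel.ι (f ≫ g) ≫ f) hu with hu_def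
      refine hB.extension_mem _ (shortExact_ker_im u) ?_ ?_
      · -- kernel u is a subobject of kernel f
        have h0 : (kernel.ι u ≫ kernel.ι (f ≫ g)) ≫ f = 0 := by
          rw [Category.assoc, ← kernel.lift_ι g (kernel.ι (f ≫ g) ≫ f) hu, ← hu_def,
            ← Category.assoc, kernel.condition, zero_comp]
        have hm : Mono (kernel.lift f _ h0 ≫ kernel.ι f) := by
          rw [kernel.lift_ι]; exact mono_comp _ _
        exact hB.subobject_mem (kernel.lift f _ h0) (mono_of_mono _ (kernel.ι f)) hf.1
      · -- image u is a subobject of kernel g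
        exact hB.subobject_mem (Abelian.image.ι u) (by infer_instance) hg.1
    · -- cokernel (f ≫ g) ∈ B
      have hw : f ≫ g ≫ cokernel.π (f ≫ g) = 0 := by
        rw [← Category.assoc, cokernel.condition]
      set w : cokernel f ⟶ cokernel (f ≫ g) :=
        cokernel.desc f (g ≫ cokernel.π (f ≫ g)) hw with hw_def
      refine hB.extension_mem _ (shortExact_im_coker w) ?_ ?_
      · exact hB.quotient_mem (Abelian.factorThruImage w) (by infer_instance) hf.2
      · -- cokernel w is a quotient of cokernel g
        have h0 : g ≫ cokernel.π (f ≫ g) ≫ cokernel.π w = 0 := by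
          rw [← Category.assoc, ← cokernel.π_desc f (g ≫ cokernel.π (f ≫ g)) hw, ← hw_def,
            Category.assoc, cokernel.condition, comp_zero]
        have he : Epi (cokernel.π g ≫ cokernel.desc g _ h0) := by
          rw [cokernel.π_desc]; exact epi_comp _ _
        exact hB.quotient_mem (cokernel.desc g _ h0) (epi_of_epi (cokernel.π g) _) hg.2

lemma serreW_pushout_inr (hB : IsSerre B) {X Y Z : A} (s : Z ⟶ X) (f : Z ⟶ Y)
    (hs : serreW B s) : serreW B (pushout.inr s f : Y ⟶ pushout s f) := by
  constructor
  · -- kernel of pushout.inr is a quotient of kernel s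
    have ht : (kernel.ι s ≫ f) ≫ pushout.inr s f = 0 := by
      rw [Category.assoc, ← pushout.condition, ← Category.assoc, kernel.condition, zero_comp]
    set t : kernel s ⟶ kernel (pushout.inr s f) :=
      kernel.lift (pushout.inr s f) (kernel.ι s ≫ f) ht with ht_def
    have hepi : Epi t := by
      rw [epi_iff_surjective_up_to_refinements]
      intro A' a
      set S0 : ShortComplex A := ShortComplex.mk (biprod.lift s (-f))
        (Abelian.BiproductToPushoutIsCokernel.biproductToPushout s f)
        (by rw [biprod.lift_desc, Preadditive.neg_comp, pushout.condition, add_neg_cancel]) with hS0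
      have hS0exact : S0.Exact := ShortComplex.exact_of_g_is_cokernel _
        (Abelian.BiproductToPushoutIsCokernel.isColimitBiproductToPushout s f)
      have hx₂ : (biprod.lift (0 : A' ⟶ X) (a ≫ kernel.ι (pushout.inr s f))) ≫ S0.g = 0 := by
        dsimp [S0]
        rw [biprod.lift_desc, zero_comp, zero_add, Category.assoc, kernel.condition, comp_zero]
      obtain ⟨A'', p, hp, z, hz⟩ := hS0exact.exact_up_to_refinements _ hx₂
      dsimp [S0] at z hz
      have hz1 : z ≫ s = 0 := by
        have := hz =≫ biprod.fst
        simpa using this.symm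
      have hz2 : p ≫ a ≫ kernel.ι (pushout.inr s f) = -(z ≫ f) := by
        have := hz =≫ biprod.snd
        simpa using this
      refine ⟨A'', p, hp, -(kernel.lift s z hz1), ?_⟩
      have hlt : kernel.lift s z hz1 ≫ t = kernel.lift (pushout.inr s f) (z ≫ f)
          (by rw [Category.assoc, ← pushout.condition, ← Category.assoc, hz1, zero_comp]) := by
        rw [← cancel_mono (kernel.ι (pushout.inr s f)), Category.assoc, ht_def, kernel.lift_ι,
          kernel.lift_ι, ← Category.assoc, kernel.lift_ι]
      rw [← cancel_mono (kernel.ι (pushout.inr s f)), Category.assoc, Preadditive.neg_comp,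
        hlt, Preadditive.neg_comp, kernel.lift_ι, hz2]
    exact hB.quotient_mem t hepi hs.1
  · -- cokernel of pushout.inr ≅ cokernel s
    have h₁ : s ≫ pushout.inl s f ≫ cokernel.π (pushout.inr s f) = 0 := by
      rw [← Category.assoc, pushout.condition, Category.assoc, cokernel.condition, comp_zero]
    have h₂ : s ≫ cokernel.π s = f ≫ (0 : Y ⟶ cokernel s) := by
      rw [cokernel.condition, comp_zero]
    have h₃ : pushout.inr s f ≫ pushout.desc (cokernel.π s) 0 h₂ = 0 := pushout.inr_desc _ _ _
    refine memIso hB (Iso.symm ?_) hs.2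
    refine ⟨cokernel.desc (pushout.inr s f) (pushout.desc (cokernel.π s) 0 h₂) h₃,
      cokernel.desc s (pushout.inl s f ≫ cokernel.π (pushout.inr s f)) h₁, ?_, ?_⟩
    · rw [← cancel_epi (cokernel.π (pushout.inr s f)), ← Category.assoc, cokernel.π_desc,
        Category.comp_id]
      refine pushout.hom_ext ?_ ?_
      · rw [← Category.assoc, pushout.inl_desc, cokernel.π_desc]
      · rw [← Category.assoc, pushout.inr_desc, zero_comp, cokernel.condition]
    · rw [← cancel_epi (cokernel.π s), ← Category.assoc, cokernel.π_desc, Category.assoc,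
        cokernel.π_desc, pushout.inl_desc, Category.comp_id]

lemma serreW_pullback_fst (hB : IsSerre B) {X Y Z : A} (f : Y ⟶ Z) (s : X ⟶ Z)
    (hs : serreW B s) : serreW B (pullback.fst f s : pullback f s ⟶ Y) := by
  constructor
  · -- kernel of pullback.fst is a subobject of kernel s
    have ha : (kernel.ι (pullback.fst f s) ≫ pullback.snd f s) ≫ s = 0 := by
      rw [Category.assoc, ← pullback.condition, ← Category.assoc, kernel.condition, zero_comp]
    refine hB.subobject_mem (kernel.lift s _ ha) ?_ hs.1
    rw [Preadditive.mono_iff_cancel_zero]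
    intro A' x hx
    have h1 : (x ≫ kernel.ι (pullback.fst f s)) ≫ pullback.snd f s = 0 := by
      have := hx =≫ kernel.ι s
      simpa [Category.assoc] using this
    have h2 : (x ≫ kernel.ι (pullback.fst f s)) ≫ pullback.fst f s = 0 := by
      rw [Category.assoc, kernel.condition, comp_zero]
    have : x ≫ kernel.ι (pullback.fst f s) = 0 := by
      refine pullback.hom_ext ?_ ?_ <;> simp [h1, h2]
    exact zero_of_comp_mono (kernel.ι (pullback.fst f s)) this
  · -- cokernel of pullback.fst is a subobject of cokernel s
    have hu : pullback.fst f s ≫ f ≫ cokernel.π s = 0 := by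
      rw [← Category.assoc, pullback.condition, Category.assoc, cokernel.condition, comp_zero]
    refine hB.subobject_mem (cokernel.desc (pullback.fst f s) _ hu) ?_ hs.2
    rw [Preadditive.mono_iff_cancel_zero]
    intro A' x hx
    obtain ⟨A'', p, hp, ξ, hξ⟩ :=
      surjective_up_to_refinements_of_epi (cokernel.π (pullback.fst f s)) x
    have hS1 : (ShortComplex.mk s (cokernel.π s) (cokernel.condition s)).Exact :=
      ShortComplex.exact_of_g_is_cokernel _ (cokernelIsCokernel s)
    have hx₂ : (ξ ≫ f) ≫ (ShortComplex.mk s (cokernel.π s) (cokernel.condition s)).g = 0 := by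
      dsimp
      have : ξ ≫ cokernel.π (pullback.fst f s) ≫ cokernel.desc (pullback.fst f s) _ hu = 0 := by
        rw [← Category.assoc, ← hξ, Category.assoc, hx, comp_zero]
      rw [cokernel.π_desc] at this
      simpa [Category.assoc] using this
    obtain ⟨A₃, q, hq, η, hη⟩ := hS1.exact_up_to_refinements _ hx₂
    dsimp at η hη
    have hζ : (q ≫ ξ) ≫ f = η ≫ s := by rw [Category.assoc, hη]
    have : (q ≫ p) ≫ x = 0 := by
      rw [Category.assoc, hξ, ← Category.assoc, ← pullback.lift_fst _ _ hζ, Category.assoc,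
        cokernel.condition, comp_zero]
    have hqp : Epi (q ≫ p) := epi_comp _ _
    exact (cancel_epi (q ≫ p)).1 (by rw [this, comp_zero])

lemma serreW_left_ext (hB : IsSerre B) {X' X Y : A} (f₁ f₂ : X ⟶ Y) (s : X' ⟶ X)
    (hs : serreW B s) (hf : s ≫ f₁ = s ≫ f₂) :
    ∃ (Y' : A) (t : Y ⟶ Y') (_ : serreW B t), f₁ ≫ t = f₂ ≫ t := by
  have h0 : s ≫ (f₁ - f₂) = 0 := by
    rw [Preadditive.comp_sub, hf, sub_self]
  let d : cokernel s ⟶ Y := cokernel.desc s (f₁ - f₂) h0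
  refine ⟨cokernel d, cokernel.π d, ⟨?_, ?_⟩, ?_⟩
  · -- kernel (cokernel.π d) = Abelian.image d is a quotient of cokernel s
    exact hB.quotient_mem (Abelian.factorThruImage d) (by infer_instance) hs.2
  · exact zeroMem hB (IsZero.of_iso (isZero_zero A) (cokernel.ofEpi (cokernel.π d)))
  · have h1 : (f₁ - f₂) ≫ cokernel.π d = 0 := by
      calc (f₁ - f₂) ≫ cokernel.π d
          = (cokernel.π s ≫ d) ≫ cokernel.π d := by rw [cokernel.π_desc]
        _ = 0 := by rw [Category.assoc, cokernel.condition, comp_zero]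
    rw [← sub_eq_zero, ← Preadditive.sub_comp]
    exact h1

lemma serreW_right_ext (hB : IsSerre B) {X Y Y' : A} (f₁ f₂ : X ⟶ Y) (s : Y ⟶ Y')
    (hs : serreW B s) (hf : f₁ ≫ s = f₂ ≫ s) :
    ∃ (X' : A) (t : X' ⟶ X) (_ : serreW B t), t ≫ f₁ = t ≫ f₂ := by
  have h0 : (f₁ - f₂) ≫ s = 0 := by
    rw [Preadditive.sub_comp, hf, sub_self]
  let l : X ⟶ kernel s := kernel.lift s (f₁ - f₂) h0
  refine ⟨kernel l, kernel.ι l, ⟨?_, ?_⟩, ?_⟩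
  · exact zeroMem hB (IsZero.of_iso (isZero_zero A) (kernel.ofMono (kernel.ι l)))
  · -- cokernel (kernel.ι l) = Abelian.coimage l ≅ Abelian.image l, a subobject of kernel s
    have him : Abelian.image l ∈ B :=
      hB.subobject_mem (Abelian.image.ι l) (by infer_instance) hs.1
    exact memIso hB (Abelian.coimageIsoImage l).symm him
  · have h1 : kernel.ι l ≫ (f₁ - f₂) = 0 := by
      calc kernel.ι l ≫ (f₁ - f₂)
          = kernel.ι l ≫ (l ≫ kernel.ι s) := by rw [kernel.lift_ι]
        _ = 0 := by rw [← Category.assoc, kernel.condition, zero_comp]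
    rw [← sub_eq_zero, ← Preadditive.comp_sub]
    exact h1

lemma serreW_hasLeftCalculus (hB : IsSerre B) : (serreW B).HasLeftCalculusOfFractions :=
  letI := serreW_multiplicative hB
  { exists_leftFraction := fun X Y φ =>
      ⟨⟨pushout.inl φ.s φ.f, pushout.inr φ.s φ.f, serreW_pushout_inr hB φ.s φ.f φ.hs⟩,
        pushout.condition.symm⟩
    ext := fun X' X Y f₁ f₂ s hs hf => serreW_left_ext hB f₁ f₂ s hs hf }

lemma serreW_hasRightCalculus (hB : IsSerre B) : (serreW B).HasRightCalculusOfFractions :=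
  letI := serreW_multiplicative hB
  { exists_rightFraction := fun X Y φ =>
      ⟨⟨pullback.fst φ.f φ.s, serreW_pullback_fst hB φ.f φ.s φ.hs, pullback.snd φ.f φ.s⟩,
        pullback.condition⟩
    ext := fun X Y Y' f₁ f₂ s hs hf => serreW_right_ext hB f₁ f₂ s hs hf }

lemma thick_transfer {B T : Set A} (hT : IsThickAb T) (hBT : B ⊆ T)
    {X Y : A} (f : X ⟶ Y) (hk : kernel f ∈ T) (hc : cokernel f ∈ T) :
    (X ∈ T ↔ Y ∈ T) := by
  constructor
  · intro hX
    have him : Abelian.image f ∈ T := hT.mem₃ _ (shortExact_ker_im f) hk hX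
    exact hT.mem₂ _ (shortExact_im_coker f) him hc
  · intro hY
    have him : Abelian.image f ∈ T := hT.mem₁ _ (shortExact_im_coker f) hY hc
    exact hT.mem₂ _ (shortExact_ker_im f) hk him

lemma thick_transfer' {B T : Set A} (hT : IsThickAb T) (hBT : B ⊆ T)
    {X Y : A} (f : X ⟶ Y) (hf : serreW B f) : (X ∈ T ↔ Y ∈ T) :=
  thick_transfer hT hBT f (hBT hf.1) (hBT hf.2)

lemma pi_additive (hB : IsSerre B) (π : A ⥤ E) [π.IsLocalization (serreW B)] :
    π.Additive := by
  haveI := serreW_hasLeftCalculus hB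
  have h := Localization.functor_additive π (serreW B)
  have e : Localization.preadditive π (serreW B) = (inferInstance : Preadditive E) :=
    Subsingleton.elim _ _
  exact Eq.mp (congrArg (fun (i : Preadditive E) => @Functor.Additive A E _ _ _ i π) e) h

section

variable (hB : IsSerre B) (π : A ⥤ E) [π.IsLocalization (serreW B)]

include hB

lemma map_epi_of_epi {X Y : A} (p : X ⟶ Y) [hp : Epi p] : Epi (π.map p) := by
  haveI := serreW_hasLeftCalculus hB
  haveI := Localization.essSurj π (serreW B)
  constructor
  intro M u v huv
  let e : π.obj (π.objPreimage M) ≅ M := π.objObjPreimageIso M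
  suffices h : u ≫ e.inv = v ≫ e.inv by
    have := h =≫ e.hom
    simpa [Category.assoc] using this
  obtain ⟨φ, h₁, h₂⟩ := Localization.exists_leftFraction₂ π (serreW B) (u ≫ e.inv) (v ≫ e.inv)
  haveI : IsIso (π.map φ.s) := Localization.inverts π (serreW B) φ.s φ.hs
  have key : π.map (p ≫ φ.f) = π.map (p ≫ φ.f') := by
    rw [π.map_comp, π.map_comp]
    have c₁ : (u ≫ e.inv) ≫ π.map φ.s = π.map φ.f := by
      rw [h₁]; exact MorphismProperty.LeftFraction.map_comp_map_s _ _ _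
    have c₂ : (v ≫ e.inv) ≫ π.map φ.s = π.map φ.f' := by
      rw [h₂]; exact MorphismProperty.LeftFraction.map_comp_map_s _ _ _
    rw [← c₁, ← c₂]
    rw [← Category.assoc (π.map p), ← Category.assoc (π.map p), ← Category.assoc,
      ← Category.assoc, huv]
  rw [MorphismProperty.map_eq_iff_postcomp π (serreW B)] at key
  obtain ⟨Z, w, hw, hkey⟩ := key
  rw [Category.assoc, Category.assoc, cancel_epi p] at hkey
  haveI : IsIso (π.map w) := Localization.inverts π (serreW B) w hw
  have : π.map φ.f = π.map φ.f' := by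
    have := congrArg π.map hkey
    rw [π.map_comp, π.map_comp] at this
    exact (cancel_mono (π.map w)).1 this
  rw [h₁, h₂]
  unfold MorphismProperty.LeftFraction.map
  rw [this]

lemma map_mono_of_mono {X Y : A} (m : X ⟶ Y) [hm : Mono m] : Mono (π.map m) := by
  haveI := serreW_hasLeftCalculus hB
  haveI := serreW_hasRightCalculus hB
  haveI := Localization.essSurj π (serreW B)
  constructor
  intro M u v huv
  let e : π.obj (π.objPreimage M) ≅ M := π.objObjPreimageIso M
  suffices h : e.hom ≫ u = e.hom ≫ v by
    have := e.inv ≫= h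
    simpa [Category.assoc] using this
  obtain ⟨ρ₁, hρ₁⟩ := Localization.exists_rightFraction π (serreW B) (e.hom ≫ u)
  obtain ⟨ρ₂, hρ₂⟩ := Localization.exists_rightFraction π (serreW B) (e.hom ≫ v)
  obtain ⟨ψ, hψ⟩ := (MorphismProperty.LeftFraction.mk ρ₁.s ρ₂.s ρ₂.hs).exists_rightFraction
  -- ψ.s : Z₃ ⟶ ρ₁.X' in W, ψ.f : Z₃ ⟶ ρ₂.X', ψ.s ≫ ρ₁.s = ψ.f ≫ ρ₂.s
  dsimp at hψ
  haveI : IsIso (π.map ρ₁.s) := Localization.inverts π (serreW B) _ ρ₁.hs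
  haveI : IsIso (π.map ρ₂.s) := Localization.inverts π (serreW B) _ ρ₂.hs
  haveI : IsIso (π.map ψ.s) := Localization.inverts π (serreW B) _ ψ.hs
  have m₁ : π.map ρ₁.s ≫ (e.hom ≫ u) = π.map ρ₁.f := by
    rw [hρ₁]; exact MorphismProperty.RightFraction.map_s_comp_map _ _ _
  have m₂ : π.map ρ₂.s ≫ (e.hom ≫ v) = π.map ρ₂.f := by
    rw [hρ₂]; exact MorphismProperty.RightFraction.map_s_comp_map _ _ _
  have key : π.map (ψ.s ≫ ρ₁.f ≫ m) = π.map (ψ.f ≫ ρ₂.f ≫ m) := by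
    simp only [π.map_comp]
    rw [← Category.assoc, ← Category.assoc, ← m₁, ← m₂]
    simp only [Category.assoc]
    rw [huv, ← π.map_comp_assoc, ← π.map_comp_assoc, hψ]
  rw [MorphismProperty.map_eq_iff_precomp π (serreW B)] at key
  obtain ⟨Z, w, hw, hkey⟩ := key
  simp only [← Category.assoc] at hkey
  rw [cancel_mono m] at hkey
  haveI : IsIso (π.map w) := Localization.inverts π (serreW B) w hw
  have h2 : π.map (ψ.s ≫ ρ₁.f) = π.map (ψ.f ≫ ρ₂.f) := by
    have := congrArg π.map hkey
    simp only [π.map_comp] at this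
    exact (cancel_epi (π.map w)).1 (by simpa only [Category.assoc, π.map_comp] using this)
  -- now deduce e.hom ≫ u = e.hom ≫ v
  have h3 : π.map ψ.s ≫ π.map ρ₁.s ≫ (e.hom ≫ u) = π.map ψ.s ≫ π.map ρ₁.s ≫ (e.hom ≫ v) := by
    rw [m₁]
    calc π.map ψ.s ≫ π.map ρ₁.f = π.map (ψ.s ≫ ρ₁.f) := by rw [π.map_comp]
      _ = π.map (ψ.f ≫ ρ₂.f) := h2
      _ = π.map ψ.f ≫ π.map ρ₂.f := by rw [π.map_comp]
      _ = π.map ψ.f ≫ π.map ρ₂.s ≫ (e.hom ≫ v) := by rw [m₂]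
      _ = π.map (ψ.f ≫ ρ₂.s) ≫ (e.hom ≫ v) := by rw [π.map_comp, Category.assoc]
      _ = π.map (ψ.s ≫ ρ₁.s) ≫ (e.hom ≫ v) := by rw [hψ]
      _ = π.map ψ.s ≫ π.map ρ₁.s ≫ (e.hom ≫ v) := by rw [π.map_comp, Category.assoc]
  rw [cancel_epi (π.map ψ.s), cancel_epi (π.map ρ₁.s)] at h3
  exact h3

lemma map_mono_ker {X Y : A} (f : X ⟶ Y) (hf : Mono (π.map f)) : kernel f ∈ B := by
  haveI := serreW_hasLeftCalculus hB
  haveI := pi_additive hB π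
  have h0 : π.map (kernel.ι f) = π.map (0 : kernel f ⟶ X) := by
    have : π.map (kernel.ι f) ≫ π.map f = π.map (0 : kernel f ⟶ X) ≫ π.map f := by
      rw [← π.map_comp, ← π.map_comp, kernel.condition, zero_comp]
    exact (cancel_mono (π.map f)).1 this
  rw [MorphismProperty.map_eq_iff_postcomp π (serreW B)] at h0
  obtain ⟨Z, s, hs, hfac⟩ := h0
  rw [zero_comp] at hfac
  have hlift : Mono (kernel.lift s (kernel.ι f) hfac ≫ kernel.ι s) := by
    rw [kernel.lift_ι]; infer_instance
  exact hB.subobject_mem (kernel.lift s (kernel.ι f) hfac) (mono_of_mono _ (kernel.ι s)) hs.1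

lemma map_epi_coker {X Y : A} (f : X ⟶ Y) (hf : Epi (π.map f)) : cokernel f ∈ B := by
  haveI := serreW_hasLeftCalculus hB
  haveI := serreW_hasRightCalculus hB
  haveI := pi_additive hB π
  have h0 : π.map (cokernel.π f) = π.map (0 : Y ⟶ cokernel f) := by
    have : π.map f ≫ π.map (cokernel.π f) = π.map f ≫ π.map (0 : Y ⟶ cokernel f) := by
      rw [← π.map_comp, ← π.map_comp, cokernel.condition, comp_zero]
    exact (cancel_epi (π.map f)).1 this
  rw [MorphismProperty.map_eq_iff_precomp π (serreW B)] at h0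
  obtain ⟨Z, s, hs, hfac⟩ := h0
  rw [comp_zero] at hfac
  have hdesc : Epi (cokernel.π s ≫ cokernel.desc s (cokernel.π f) hfac) := by
    rw [cokernel.π_desc]; infer_instance
  exact hB.quotient_mem (cokernel.desc s (cokernel.π f) hfac) (epi_of_epi (cokernel.π s) _) hs.2

lemma serreW_of_map_isIso {X Y : A} (f : X ⟶ Y) (hf : IsIso (π.map f)) : serreW B f := by
  haveI := hf
  exact ⟨map_mono_ker hB π f inferInstance, map_epi_coker hB π f inferInstance⟩

end

section

variable (hB : IsSerre B) (π : A ⥤ E) [π.IsLocalization (serreW B)]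
variable {T : Set A} (hT : IsThickAb T) (hBT : B ⊆ T)

include hB hT hBT

lemma key_mem {X X' : A} (e : π.obj X ≅ π.obj X') (hX' : X' ∈ T) : X ∈ T := by
  haveI := serreW_hasLeftCalculus hB
  obtain ⟨φ, hφ⟩ := Localization.exists_leftFraction π (serreW B) e.hom
  haveI : IsIso (π.map φ.s) := Localization.inverts π (serreW B) _ φ.hs
  have hmap : e.hom ≫ π.map φ.s = π.map φ.f := by
    rw [hφ]; exact MorphismProperty.LeftFraction.map_comp_map_s _ _ _
  have hiso : IsIso (π.map φ.f) := by
    rw [← hmap]; infer_instance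
  have hfW : serreW B φ.f := serreW_of_map_isIso hB π φ.f hiso
  exact (thick_transfer' hT hBT φ.f hfW).2 ((thick_transfer' hT hBT φ.s φ.hs).1 hX')

lemma central (S : ShortComplex E) (hS : S.ShortExact)
    (A₁ A₂ A₃ : A) (e₁ : π.obj A₁ ≅ S.X₁) (e₂ : π.obj A₂ ≅ S.X₂) (e₃ : π.obj A₃ ≅ S.X₃) :
    (A₁ ∈ T → A₃ ∈ T → A₂ ∈ T) ∧ (A₂ ∈ T → A₃ ∈ T → A₁ ∈ T) ∧
      (A₁ ∈ T → A₂ ∈ T → A₃ ∈ T) := by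
  haveI := serreW_hasLeftCalculus hB
  haveI := serreW_hasRightCalculus hB
  haveI := pi_additive hB π
  haveI := hS.mono_f
  haveI := hS.epi_g
  -- Step 1: realize S.f as an actual morphism φ.f : A₁ ⟶ φ.Y'
  obtain ⟨φ, hφ⟩ := Localization.exists_leftFraction π (serreW B) (e₁.hom ≫ S.f ≫ e₂.inv)
  haveI : IsIso (π.map φ.s) := Localization.inverts π (serreW B) _ φ.hs
  have ha₀ : (e₁.hom ≫ S.f ≫ e₂.inv) ≫ π.map φ.s = π.map φ.f := by
    rw [hφ]; exact MorphismProperty.LeftFraction.map_comp_map_s _ _ _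
  have hmono : Mono (π.map φ.f) := by
    have : Mono ((e₁.hom ≫ S.f ≫ e₂.inv) ≫ π.map φ.s) := by
      have : Mono (S.f ≫ e₂.inv) := mono_comp _ _
      have : Mono (e₁.hom ≫ S.f ≫ e₂.inv) := mono_comp _ _
      exact mono_comp _ _
    rwa [ha₀] at this
  -- Step 2: realize S.g as an actual morphism ψ.f : φ.Y' ⟶ ψ.Y'
  obtain ⟨ψ, hψ⟩ := Localization.exists_leftFraction π (serreW B)
    (inv (π.map φ.s) ≫ e₂.hom ≫ S.g ≫ e₃.inv)
  haveI : IsIso (π.map ψ.s) := Localization.inverts π (serreW B) _ ψ.hs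
  have hb₀ : (inv (π.map φ.s) ≫ e₂.hom ≫ S.g ≫ e₃.inv) ≫ π.map ψ.s = π.map ψ.f := by
    rw [hψ]; exact MorphismProperty.LeftFraction.map_comp_map_s _ _ _
  haveI hepi0 : Epi (π.map ψ.f) := by
    have : Epi ((inv (π.map φ.s) ≫ e₂.hom ≫ S.g ≫ e₃.inv) ≫ π.map ψ.s) := by
      have : Epi (S.g ≫ e₃.inv) := epi_comp _ _
      have : Epi (e₂.hom ≫ S.g ≫ e₃.inv) := epi_comp _ _
      have : Epi (inv (π.map φ.s) ≫ e₂.hom ≫ S.g ≫ e₃.inv) := epi_comp _ _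
      exact epi_comp _ _
    rwa [hb₀] at this
  -- Step 3: make the composite zero on the nose
  have hz : π.map (φ.f ≫ ψ.f) = π.map (0 : A₁ ⟶ ψ.Y') := by
    rw [π.map_comp, π.map_zero, ← ha₀, ← hb₀]
    simp only [Category.assoc, IsIso.hom_inv_id_assoc, Iso.inv_hom_id_assoc]
    slice_lhs 2 3 => rw [S.zero]
    simp
  rw [MorphismProperty.map_eq_iff_postcomp π (serreW B)] at hz
  obtain ⟨Z₃, w, hw, hzw⟩ := hz
  rw [zero_comp] at hzw
  haveI : IsIso (π.map w) := Localization.inverts π (serreW B) _ hw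
  have hab : φ.f ≫ (ψ.f ≫ w) = 0 := by rw [← Category.assoc]; exact hzw
  haveI hepib : Epi (π.map (ψ.f ≫ w)) := by
    rw [π.map_comp]; exact epi_comp _ _
  have hscz : π.map φ.f ≫ π.map (ψ.f ≫ w) = 0 := by
    rw [← π.map_comp, hab, π.map_zero]
  -- Step 4: the image short complex is short exact
  have hIso : S ≅ ShortComplex.mk (π.map φ.f) (π.map (ψ.f ≫ w)) hscz := by
    refine ShortComplex.isoMk e₁.symm
      (e₂.symm ≪≫ Localization.isoOfHom π (serreW B) φ.s φ.hs)
      (e₃.symm ≪≫ Localization.isoOfHom π (serreW B) ψ.s ψ.hs ≪≫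
        Localization.isoOfHom π (serreW B) w hw) ?_ ?_
    · dsimp
      rw [← ha₀]
      simp
    · dsimp
      rw [π.map_comp, ← hb₀]
      simp
  have hSc : (ShortComplex.mk (π.map φ.f) (π.map (ψ.f ≫ w)) hscz).ShortExact :=
    ShortComplex.shortExact_of_iso hIso hS
  -- Step 5: π inverts the comparison map A₁ ⟶ kernel (ψ.f ≫ w)
  have hkb : π.map (kernel.ι (ψ.f ≫ w)) ≫ π.map (ψ.f ≫ w) = 0 := by
    rw [← π.map_comp, kernel.condition, π.map_zero]
  obtain ⟨δ, hδ⟩ := KernelFork.IsLimit.lift' hSc.fIsKernel (π.map (kernel.ι (ψ.f ≫ w))) hkb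
  have ha'ι : kernel.lift (ψ.f ≫ w) φ.f hab ≫ kernel.ι (ψ.f ≫ w) = φ.f := kernel.lift_ι _ _ _
  have h1 : π.map (kernel.lift (ψ.f ≫ w) φ.f hab) ≫ δ = 𝟙 _ := by
    haveI : Mono (π.map φ.f) := hmono
    rw [← cancel_mono (π.map φ.f)]
    have hδ' : δ ≫ π.map φ.f = π.map (kernel.ι (ψ.f ≫ w)) := hδ
    rw [Category.assoc, hδ', ← π.map_comp, ha'ι, Category.id_comp]
  have h2 : δ ≫ π.map (kernel.lift (ψ.f ≫ w) φ.f hab) = 𝟙 _ := by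
    haveI : Mono (π.map (kernel.ι (ψ.f ≫ w))) := map_mono_of_mono hB π _
    rw [← cancel_mono (π.map (kernel.ι (ψ.f ≫ w)))]
    have hδ' : δ ≫ π.map φ.f = π.map (kernel.ι (ψ.f ≫ w)) := hδ
    rw [Category.assoc, ← π.map_comp, ha'ι, hδ', Category.id_comp]
  have hiso_a' : IsIso (π.map (kernel.lift (ψ.f ≫ w) φ.f hab)) := ⟨δ, h1, h2⟩
  -- Step 6: memberships in B
  have hcok_b : cokernel (ψ.f ≫ w) ∈ B := map_epi_coker hB π _ hepib
  have hker_a' : kernel (kernel.lift (ψ.f ≫ w) φ.f hab) ∈ B := by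
    have hker_a₀ : kernel φ.f ∈ B := map_mono_ker hB π φ.f hmono
    have h0 : kernel.ι (kernel.lift (ψ.f ≫ w) φ.f hab) ≫ φ.f = 0 := by
      calc kernel.ι (kernel.lift (ψ.f ≫ w) φ.f hab) ≫ φ.f
          = kernel.ι (kernel.lift (ψ.f ≫ w) φ.f hab) ≫
            (kernel.lift (ψ.f ≫ w) φ.f hab ≫ kernel.ι (ψ.f ≫ w)) := by rw [ha'ι]
        _ = 0 := by rw [← Category.assoc, kernel.condition, zero_comp]
    have hm : Mono (kernel.lift φ.f _ h0 ≫ kernel.ι φ.f) := by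
      rw [kernel.lift_ι]; infer_instance
    exact hB.subobject_mem (kernel.lift φ.f _ h0) (mono_of_mono _ (kernel.ι φ.f)) hker_a₀
  have hcok_a' : cokernel (kernel.lift (ψ.f ≫ w) φ.f hab) ∈ B := by
    haveI := hiso_a'
    exact map_epi_coker hB π _ inferInstance
  -- Step 7: membership transfers
  have t₂ : A₂ ∈ T ↔ φ.Y' ∈ T := thick_transfer' hT hBT φ.s φ.hs
  have t₃ : A₃ ∈ T ↔ Z₃ ∈ T :=
    (thick_transfer' hT hBT ψ.s ψ.hs).trans (thick_transfer' hT hBT w hw)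
  have t₁ : A₁ ∈ T ↔ kernel (ψ.f ≫ w) ∈ T :=
    thick_transfer hT hBT _ (hBT hker_a') (hBT hcok_a')
  refine ⟨?_, ?_, ?_⟩
  · intro h₁ h₃
    have hK : kernel (ψ.f ≫ w) ∈ T := t₁.1 h₁
    have hZ₃ : Z₃ ∈ T := t₃.1 h₃
    have him : Abelian.image (ψ.f ≫ w) ∈ T :=
      hT.mem₁ _ (shortExact_im_coker (ψ.f ≫ w)) hZ₃ (hBT hcok_b)
    exact t₂.2 (hT.mem₂ _ (shortExact_ker_im (ψ.f ≫ w)) hK him)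
  · intro h₂ h₃
    have hZ : φ.Y' ∈ T := t₂.1 h₂
    have hZ₃ : Z₃ ∈ T := t₃.1 h₃
    have him : Abelian.image (ψ.f ≫ w) ∈ T :=
      hT.mem₁ _ (shortExact_im_coker (ψ.f ≫ w)) hZ₃ (hBT hcok_b)
    exact t₁.2 (hT.mem₁ _ (shortExact_ker_im (ψ.f ≫ w)) hZ him)
  · intro h₁ h₂
    have hK : kernel (ψ.f ≫ w) ∈ T := t₁.1 h₁
    have hZ : φ.Y' ∈ T := t₂.1 h₂
    have him : Abelian.image (ψ.f ≫ w) ∈ T :=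
      hT.mem₃ _ (shortExact_ker_im (ψ.f ≫ w)) hK hZ
    exact t₃.2 (hT.mem₂ _ (shortExact_im_coker (ψ.f ≫ w)) him (hBT hcok_b))

lemma image_retract {X Y : E} (hR : IsRetract X Y) (hY : Y ∈ imageSet π T) :
    X ∈ imageSet π T := by
  haveI := serreW_hasLeftCalculus hB
  haveI := pi_additive hB π
  haveI := Localization.essSurj π (serreW B)
  obtain ⟨X'', hX'', ⟨eY⟩⟩ := hY
  obtain ⟨s, r, hsr⟩ := hR
  let X₀ := π.objPreimage X
  let e₀ : π.obj X₀ ≅ X := π.objObjPreimageIso X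
  let s' : π.obj X₀ ⟶ π.obj X'' := e₀.hom ≫ s ≫ eY.inv
  let r' : π.obj X'' ⟶ π.obj X₀ := eY.hom ≫ r ≫ e₀.inv
  have hsr' : s' ≫ r' = 𝟙 _ := by
    simp [s', r', reassoc_of% hsr]
  -- split short complex  π X₀ ⟶ π X'' ⟶ cokernel s'
  have hexact : (ShortComplex.mk s' (cokernel.π s') (cokernel.condition s')).Exact :=
    ShortComplex.exact_of_g_is_cokernel _ (cokernelIsCokernel s')
  let spl := ShortComplex.Splitting.ofExactOfRetraction _ hexact r' hsr'
    (by dsimp; infer_instance)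
  let isoB : π.obj X'' ≅ π.obj X₀ ⊞ cokernel s' := spl.isoBinaryBiproduct
  let X₁ := π.objPreimage (cokernel s')
  let e₁ : π.obj X₁ ≅ cokernel s' := π.objObjPreimageIso (cokernel s')
  haveI hfb : PreservesFiniteBiproducts π := inferInstance
  haveI : PreservesBiproductsOfShape WalkingPair π := hfb.preserves
  haveI : PreservesBinaryBiproduct X₀ X₁ π := preservesBinaryBiproduct_of_preservesBiproduct π X₀ X₁
  let big : π.obj (X₀ ⊞ X₁) ≅ π.obj X'' :=
    π.mapBiprod X₀ X₁ ≪≫ biprod.mapIso (Iso.refl _) e₁ ≪≫ isoB.symm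
  have hmem : (X₀ ⊞ X₁) ∈ T := key_mem hB π hT hBT big hX''
  have hX₀ : X₀ ∈ T := hT.retract_mem ⟨biprod.inl, biprod.fst, biprod.inl_fst⟩ hmem
  exact ⟨X₀, hX₀, ⟨e₀⟩⟩

theorem main :
    IsThickAb (imageSet π T) ∧ T = {X : A | π.obj X ∈ imageSet π T} := by
  haveI := serreW_hasLeftCalculus hB
  haveI := serreW_hasRightCalculus hB
  haveI := pi_additive hB π
  haveI := Localization.essSurj π (serreW B)
  constructor
  · constructor
    · rintro X Y e ⟨X'', h, ⟨e'⟩⟩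
      exact ⟨X'', h, ⟨e' ≪≫ e⟩⟩
    · intro X hX
      exact ⟨0, hBT (zeroMem hB (isZero_zero A)),
        ⟨(Functor.map_isZero π (isZero_zero A)).iso hX⟩⟩
    · intro X Y hR hY
      exact image_retract hB π hT hBT hR hY
    · intro S hS h1 h3
      obtain ⟨A₁, hA₁, ⟨ea⟩⟩ := h1
      obtain ⟨A₃, hA₃, ⟨ec⟩⟩ := h3
      exact ⟨π.objPreimage S.X₂,
        (central hB π hT hBT S hS A₁ _ A₃ ea (π.objObjPreimageIso S.X₂) ec).1 hA₁ hA₃,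
        ⟨π.objObjPreimageIso S.X₂⟩⟩
    · intro S hS h2 h3
      obtain ⟨A₂, hA₂, ⟨eb⟩⟩ := h2
      obtain ⟨A₃, hA₃, ⟨ec⟩⟩ := h3
      exact ⟨π.objPreimage S.X₁,
        (central hB π hT hBT S hS _ A₂ A₃ (π.objObjPreimageIso S.X₁) eb ec).2.1 hA₂ hA₃,
        ⟨π.objObjPreimageIso S.X₁⟩⟩
    · intro S hS h1 h2
      obtain ⟨A₁, hA₁, ⟨ea⟩⟩ := h1
      obtain ⟨A₂, hA₂, ⟨eb⟩⟩ := h2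
      exact ⟨π.objPreimage S.X₃,
        (central hB π hT hBT S hS A₁ A₂ _ ea eb (π.objObjPreimageIso S.X₃)).2.2 hA₁ hA₂,
        ⟨π.objObjPreimageIso S.X₃⟩⟩
  · apply Set.ext
    intro X
    constructor
    · intro hX
      exact ⟨X, hX, ⟨Iso.refl _⟩⟩
    · rintro ⟨X', hX', ⟨e⟩⟩
      exact key_mem hB π hT hBT e.symm hX'

end

end SerreAux

variable {D : Type u'} [Category.{v'} D] [Abelian D]

/-- Let `B` be a Serre subcategory of `C` with quotient functor `π : C ⥤ D`, and let `T`
be a thick subcategory of `C` containing `B`.  Then `π(T)` (the objects of `D`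
isomorphic to `π(X)` for some `X ∈ T`) is a thick subcategory of `D`, and
`T = π⁻¹(π(T))`. -/
theorem image_thick_and_preimage_image (B : Set C) (hB : IsSerre B)
    (π : C ⥤ D) [π.IsLocalization (serreW B)]
    (T : Set C) (hT : IsThickAb T) (hBT : B ⊆ T) :
    IsThickAb (imageSet π T) ∧ T = {X : C | π.obj X ∈ imageSet π T} :=
  SerreAux.main hB π hT hBT
end
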